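/- arXiv:2008.03733 — 6 statements merged into one kernel-verified Lean document; each statement's English description precedes it below -/
import Mathlib

section
/- Stein's lemma (univariate case): Let γ denote the standard Gaussian measure N(0,1) on ℝ. If g : ℝ → ℝ is differentiable, its derivative g' is integrable with respect to γ, and the function z ↦ z·g(z) is integrable with respect to γ, then ∫ g'(z) dγ(z) = ∫ z·g(z) dγ(z). -/
open MeasureTheory ProbabilityTheory Set Real
open scoped NNReal

/-!
Writing `φ` for the density of `N(μ, v)`, one has `φ' = -((x - μ) / v) φ`, so
`(φ g)' = φ g' - (x - μ) φ g / v`. Both terms are Lebesgue integrable by hypothesis, and so is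
`φ g` itself (it is continuous, and dominated by `(x - μ) φ g` away from `μ`). The integral of the
derivative of an integrable function with integrable derivative vanishes, which is the identity.
-/

lemma hasDerivAt_gaussianPDFReal (μ : ℝ) (v : ℝ≥0) (x : ℝ) :
    HasDerivAt (gaussianPDFReal μ v) (-((x - μ) / v) * gaussianPDFReal μ v x) x := by
  have hexp : HasDerivAt (fun y => -(y - μ) ^ 2 / (2 * v)) (-((x - μ) / v)) x :=
    ((((hasDerivAt_id' x).sub_const μ).fun_pow 2).fun_neg.div_const (2 * (v : ℝ))).congr_deriv
      (by ring)
  exact (hexp.exp.const_mul (√(2 * π * v))⁻¹).congr_deriv (by rw [gaussianPDFReal]; ring)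

lemma differentiable_gaussianPDFReal (μ : ℝ) (v : ℝ≥0) :
    Differentiable ℝ (gaussianPDFReal μ v) :=
  fun x => (hasDerivAt_gaussianPDFReal μ v x).differentiableAt

lemma integrable_gaussianReal_iff {E : Type*} [NormedAddCommGroup E] [NormedSpace ℝ E]
    {μ : ℝ} {v : ℝ≥0} {f : ℝ → E} (hv : v ≠ 0) :
    Integrable f (gaussianReal μ v) ↔ Integrable (fun x => gaussianPDFReal μ v x • f x) := by
  rw [gaussianReal_of_var_ne_zero _ hv, integrable_withDensity_iff_integrable_smul'
    (measurable_gaussianPDF _ _) (ae_of_all _ fun _ => gaussianPDF_lt_top)]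
  simp only [toReal_gaussianPDF]

lemma Continuous.integrable_of_integrable_sub_smul {E : Type*} [NormedAddCommGroup E]
    [NormedSpace ℝ E] {f : ℝ → E} (c : ℝ) (hf : Continuous f)
    (h : Integrable (fun x => (x - c) • f x)) : Integrable f := by
  rw [← integrableOn_univ, ← union_compl_self (Icc (c - 1) (c + 1))]
  refine hf.continuousOn.integrableOn_Icc.union <|
    h.restrict.mono hf.aestronglyMeasurable.restrict <|
      ae_restrict_of_forall_mem measurableSet_Icc.compl fun x hx => ?_
  have hdist : 1 ≤ |x - c| := by
    rw [mem_compl_iff, mem_Icc, not_and_or, not_le, not_le] at hx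
    rcases hx with hx | hx
    · rw [abs_of_neg (by linarith)]; linarith
    · rw [abs_of_pos (by linarith)]; linarith
  rw [norm_smul, Real.norm_eq_abs]
  exact le_mul_of_one_le_left (norm_nonneg _) hdist

theorem var_mul_integral_deriv_gaussianReal {μ : ℝ} {v : ℝ≥0} (hv : v ≠ 0) {g : ℝ → ℝ}
    (hg : Differentiable ℝ g) (hg' : Integrable (deriv g) (gaussianReal μ v))
    (hxg : Integrable (fun x => (x - μ) * g x) (gaussianReal μ v)) :
    v * ∫ x, deriv g x ∂gaussianReal μ v = ∫ x, (x - μ) * g x ∂gaussianReal μ v := by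
  set φ := gaussianPDFReal μ v
  have hφg' : Integrable (fun x => φ x * deriv g x) := (integrable_gaussianReal_iff hv).1 hg'
  have hφxg : Integrable (fun x => φ x * ((x - μ) * g x)) := (integrable_gaussianReal_iff hv).1 hxg
  have hφg : Integrable (fun x => φ x * g x) :=
    ((differentiable_gaussianPDFReal μ v).continuous.mul
      hg.continuous).integrable_of_integrable_sub_smul μ
      (hφxg.congr (ae_of_all _ fun x => by simp only [smul_eq_mul]; ring))
  have hderiv : ∀ x, HasDerivAt (fun x => φ x * g x)
      (φ x * deriv g x - (φ x * ((x - μ) * g x)) / v) x := fun x =>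
    ((hasDerivAt_gaussianPDFReal μ v x).mul (hg x).hasDerivAt).congr_deriv (by ring)
  have hparts := integral_eq_zero_of_hasDerivAt_of_integrable hderiv
    (hφg'.sub (hφxg.div_const _)) hφg
  rw [integral_sub hφg' (hφxg.div_const _), integral_div, sub_eq_zero] at hparts
  rw [integral_gaussianReal_eq_integral_smul hv, integral_gaussianReal_eq_integral_smul hv]
  simp only [smul_eq_mul]
  rw [hparts]
  exact mul_div_cancel₀ _ (NNReal.coe_ne_zero.2 hv)

/-- Stein's lemma (univariate case): if `g : ℝ → ℝ` is differentiable, its derivative is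
integrable with respect to the standard Gaussian measure `γ = N(0,1)`, and `z ↦ z * g z` is
integrable with respect to `γ`, then `∫ g'(z) dγ(z) = ∫ z * g z dγ(z)`. -/
theorem stein_lemma_univariate (g : ℝ → ℝ) (hg : Differentiable ℝ g)
    (hg' : Integrable (deriv g) (gaussianReal 0 1))
    (hzg : Integrable (fun z => z * g z) (gaussianReal 0 1)) :
    ∫ z, deriv g z ∂(gaussianReal 0 1) = ∫ z, z * g z ∂(gaussianReal 0 1) := by
  simpa using var_mul_integral_deriv_gaussianReal one_ne_zero hg hg' (by simpa using hzg)
end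

section
/- Multivariate Stein's lemma: Let Z be a random vector in ℝ^d whose law is the multivariate Gaussian distribution with mean 0 and positive definite covariance matrix Σ. Let h : ℝ^d → ℝ be differentiable with every partial derivative ∂h/∂z_l integrable with respect to the law of Z, and with z ↦ z_k·h(z) integrable for every k. Then for every k ∈ {1,…,d}, E[Z_k·h(Z)] = Σ_{l=1}^d Σ[k,l]·E[(∂h/∂z_l)(Z)]; equivalently, E[∇h(Z)] = Σ^{-1}·E[Z·h(Z)]. -/
open MeasureTheory ProbabilityTheory Real Matrix

/-- The density of the multivariate Gaussian distribution on `ℝ^d` with mean `0` and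
(positive definite) covariance matrix `S`. -/
noncomputable def mvGaussianPDF {d : ℕ} (S : Matrix (Fin d) (Fin d) ℝ) (z : Fin d → ℝ) : ℝ :=
  (Real.sqrt ((2 * π) ^ d * S.det))⁻¹ * Real.exp (-(z ⬝ᵥ S⁻¹.mulVec z) / 2)

/-- The multivariate Gaussian measure on `ℝ^d` with mean `0` and covariance matrix `S`. -/
noncomputable def mvGaussian {d : ℕ} (S : Matrix (Fin d) (Fin d) ℝ) :
    Measure (Fin d → ℝ) :=
  volume.withDensity (fun z => ENNReal.ofReal (mvGaussianPDF S z))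

/-!
Gaussian integration by parts. The density `p` of `N(0, Σ)` satisfies
`∂_v p(z) = -(v ⬝ Σ⁻¹ z) p(z)`, so the integration by parts formula `∫ h ∂_v p = -∫ (∂_v h) p`
(valid as soon as `h p`, `(∂_v h) p` and `h ∂_v p` are integrable) reads
`E[∂_v h(Z)] = vᵀ Σ⁻¹ E[Z h(Z)]`; multiplying by `Σ` gives the other form. Integrability of
`h p` follows from that of the `z_k h p`: off the unit cube some `|z_k| ≥ 1`, so
`|h| ≤ ∑ₖ |z_k h|`, and `h` is bounded on the cube.
-/

section CoordinateMoments

variable {ι : Type*} [Fintype ι] {μ : Measure (ι → ℝ)} {f : (ι → ℝ) → ℝ}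

theorem integrable_of_forall_integrable_coord_mul [IsFiniteMeasureOnCompacts μ]
    (hf : Continuous f) (hcoord : ∀ k, Integrable (fun z => z k * f z) μ) : Integrable f μ := by
  obtain ⟨C, hC⟩ := (isCompact_closedBall (0 : ι → ℝ) 1).exists_bound_of_continuousOn
    hf.continuousOn
  have hbound : ∀ z, ‖f z‖ ≤ (Metric.closedBall 0 1).indicator (fun _ => C) z
      + ∑ k, ‖z k * f z‖ := by
    intro z
    by_cases hz : z ∈ Metric.closedBall 0 1
    · rw [Set.indicator_of_mem hz]
      exact le_add_of_le_of_nonneg (hC z hz) (by positivity)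
    · obtain ⟨k, hk⟩ : ∃ k, 1 < ‖z k‖ := by
        simpa [pi_norm_le_iff_of_nonneg zero_le_one] using hz
      rw [Set.indicator_of_notMem hz, zero_add]
      calc ‖f z‖ ≤ ‖z k‖ * ‖f z‖ := le_mul_of_one_le_left (norm_nonneg _) hk.le
        _ = ‖z k * f z‖ := (norm_mul _ _).symm
        _ ≤ ∑ k, ‖z k * f z‖ :=
          Finset.single_le_sum (f := fun k => ‖z k * f z‖) (fun _ _ => norm_nonneg _)
            (Finset.mem_univ k)
  refine Integrable.mono' ?_ hf.aestronglyMeasurable (ae_of_all _ hbound)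
  exact ((integrableOn_const (isCompact_closedBall 0 1).measure_ne_top).integrable_indicator
    measurableSet_closedBall).add (integrable_finsetSum _ fun k _ => (hcoord k).norm)

theorem integrable_dotProduct_mul (hcoord : ∀ k, Integrable (fun z => z k * f z) μ) (w : ι → ℝ) :
    Integrable (fun z => (w ⬝ᵥ z) * f z) μ := by
  simp only [dotProduct, Finset.sum_mul, mul_assoc]
  exact integrable_finsetSum _ fun k _ => (hcoord k).const_mul (w k)

theorem integral_dotProduct_mul (hcoord : ∀ k, Integrable (fun z => z k * f z) μ) (w : ι → ℝ) :
    ∫ z, (w ⬝ᵥ z) * f z ∂μ = w ⬝ᵥ fun k => ∫ z, z k * f z ∂μ := by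
  simp only [dotProduct, Finset.sum_mul, mul_assoc]
  rw [integral_finsetSum _ fun k _ => (hcoord k).const_mul (w k)]
  simp only [integral_const_mul]

end CoordinateMoments

theorem Matrix.hasLineDerivAt_dotProduct_mulVec {ι : Type*} [Fintype ι] (A : Matrix ι ι ℝ)
    (z v : ι → ℝ) :
    HasLineDerivAt ℝ (fun z => z ⬝ᵥ A *ᵥ z) (v ⬝ᵥ A *ᵥ z + z ⬝ᵥ A *ᵥ v) z v := by
  have expand : ∀ t : ℝ, (z + t • v) ⬝ᵥ A *ᵥ (z + t • v)
      = z ⬝ᵥ A *ᵥ z + t * (v ⬝ᵥ A *ᵥ z + z ⬝ᵥ A *ᵥ v) + t ^ 2 * (v ⬝ᵥ A *ᵥ v) := by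
    intro t
    simp only [mulVec_add, mulVec_smul, add_dotProduct, dotProduct_add, smul_dotProduct,
      dotProduct_smul, smul_eq_mul]
    ring
  unfold HasLineDerivAt
  simp only [expand]
  convert (((hasDerivAt_id' (0 : ℝ)).mul_const (v ⬝ᵥ A *ᵥ z + z ⬝ᵥ A *ᵥ v)).const_add
    (z ⬝ᵥ A *ᵥ z)).fun_add ((hasDerivAt_pow 2 (0 : ℝ)).mul_const (v ⬝ᵥ A *ᵥ v)) using 1
  simp

section mvGaussian

variable {d : ℕ} {S : Matrix (Fin d) (Fin d) ℝ}

theorem mvGaussianPDF_nonneg (z : Fin d → ℝ) : 0 ≤ mvGaussianPDF S z := by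
  unfold mvGaussianPDF
  positivity

theorem continuous_mvGaussianPDF : Continuous (mvGaussianPDF S) := by
  unfold mvGaussianPDF
  fun_prop

theorem measurable_ofReal_mvGaussianPDF :
    Measurable fun z => ENNReal.ofReal (mvGaussianPDF S z) :=
  continuous_mvGaussianPDF.measurable.ennreal_ofReal

instance isLocallyFiniteMeasure_mvGaussian : IsLocallyFiniteMeasure (mvGaussian S) :=
  IsLocallyFiniteMeasure.withDensity_ofReal (continuous_mvGaussianPDF (S := S))

theorem integrable_mvGaussian_iff {f : (Fin d → ℝ) → ℝ} :
    Integrable f (mvGaussian S) ↔ Integrable (fun z => f z * mvGaussianPDF S z) := by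
  rw [mvGaussian, integrable_withDensity_iff measurable_ofReal_mvGaussianPDF
    (ae_of_all _ fun _ => ENNReal.ofReal_lt_top)]
  simp only [ENNReal.toReal_ofReal (mvGaussianPDF_nonneg _)]

theorem integral_mvGaussian (f : (Fin d → ℝ) → ℝ) :
    ∫ z, f z ∂mvGaussian S = ∫ z, f z * mvGaussianPDF S z := by
  rw [mvGaussian, integral_withDensity_eq_integral_toReal_smul measurable_ofReal_mvGaussianPDF
    (ae_of_all _ fun _ => ENNReal.ofReal_lt_top)]
  simp only [ENNReal.toReal_ofReal (mvGaussianPDF_nonneg _), smul_eq_mul, mul_comm]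

theorem hasLineDerivAt_mvGaussianPDF (hS : S.IsHermitian) (z v : Fin d → ℝ) :
    HasLineDerivAt ℝ (mvGaussianPDF S) (-(v ⬝ᵥ S⁻¹ *ᵥ z) * mvGaussianPDF S z) z v := by
  have hsymm : z ⬝ᵥ S⁻¹ *ᵥ v = v ⬝ᵥ S⁻¹ *ᵥ z := by
    rw [dotProduct_mulVec, dotProduct_comm, ← mulVec_transpose,
      ← conjTranspose_eq_transpose_of_trivial, hS.inv.eq]
  have hq := (S⁻¹).hasLineDerivAt_dotProduct_mulVec z v
  rw [hsymm, ← two_mul] at hq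
  unfold HasLineDerivAt at hq ⊢
  refine (((hq.fun_neg.div_const 2).exp).const_mul _).congr_deriv ?_
  simp only [mvGaussianPDF, zero_smul, add_zero]
  ring

theorem integral_fderiv_mvGaussian (hS : S.IsHermitian) {h : (Fin d → ℝ) → ℝ}
    (hdiff : Differentiable ℝ h) (v : Fin d → ℝ)
    (hderiv : Integrable (fun z => fderiv ℝ h z v) (mvGaussian S))
    (hcoord : ∀ k, Integrable (fun z => z k * h z) (mvGaussian S)) :
    ∫ z, fderiv ℝ h z v ∂mvGaussian S
      = (v ᵥ* S⁻¹) ⬝ᵥ fun k => ∫ z, z k * h z ∂mvGaussian S := by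
  have hrearrange : ∀ z, h z * (-(v ⬝ᵥ S⁻¹ *ᵥ z) * mvGaussianPDF S z)
      = -(((v ᵥ* S⁻¹) ⬝ᵥ z) * h z * mvGaussianPDF S z) := fun z => by
    rw [dotProduct_mulVec]
    ring
  have hmoment : Integrable fun z => h z * (-(v ⬝ᵥ S⁻¹ *ᵥ z) * mvGaussianPDF S z) := by
    simpa only [hrearrange] using
      (integrable_mvGaussian_iff.1 (integrable_dotProduct_mul hcoord (v ᵥ* S⁻¹))).fun_neg
  have hh : Integrable h (mvGaussian S) :=
    integrable_of_forall_integrable_coord_mul hdiff.continuous hcoord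
  have ibp := integral_bilinear_hasLineDerivAt_right_eq_neg_left_of_integrable
    (B := ContinuousLinearMap.mul ℝ ℝ) (integrable_mvGaussian_iff.1 hderiv) hmoment
    (integrable_mvGaussian_iff.1 hh)
    (fun z _ => (hdiff z).hasFDerivAt.hasLineDerivAt v)
    (fun z _ => hasLineDerivAt_mvGaussianPDF hS z v)
  simp only [ContinuousLinearMap.mul_apply', hrearrange, integral_neg, neg_inj] at ibp
  rw [← integral_dotProduct_mul hcoord, integral_mvGaussian, integral_mvGaussian, ibp]

end mvGaussian

/-- Multivariate Stein's lemma: if `Z ∼ N(0, S)` with `S` positive definite and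
`h : ℝ^d → ℝ` is differentiable with every partial derivative integrable and every
`z ↦ z k * h z` integrable, then `E[Z_k h(Z)] = ∑ l, S[k,l] E[∂h/∂z_l (Z)]`, or
equivalently `E[∇h(Z)] = S⁻¹ E[Z h(Z)]`. -/
theorem multivariate_stein_lemma {d : ℕ}
    (S : Matrix (Fin d) (Fin d) ℝ) (hS : S.PosDef)
    (h : (Fin d → ℝ) → ℝ) (hdiff : Differentiable ℝ h)
    (hint : ∀ l : Fin d, Integrable (fun z => fderiv ℝ h z (Pi.single l 1)) (mvGaussian S))
    (hzh : ∀ k : Fin d, Integrable (fun z => z k * h z) (mvGaussian S)) :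
    (∀ k : Fin d,
        ∫ z, z k * h z ∂(mvGaussian S)
          = ∑ l : Fin d, S k l * ∫ z, fderiv ℝ h z (Pi.single l 1) ∂(mvGaussian S)) ∧
    (∀ l : Fin d,
        ∫ z, fderiv ℝ h z (Pi.single l 1) ∂(mvGaussian S)
          = ∑ k : Fin d, S⁻¹ l k * ∫ z, z k * h z ∂(mvGaussian S)) := by
  set m : Fin d → ℝ := fun k => ∫ z, z k * h z ∂mvGaussian S
  have hgrad : ∀ l, ∫ z, fderiv ℝ h z (Pi.single l 1) ∂mvGaussian S = (S⁻¹ *ᵥ m) l := fun l => by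
    rw [integral_fderiv_mvGaussian hS.1 hdiff _ (hint l) hzh, ← dotProduct_mulVec,
      single_dotProduct, one_mul]
  refine ⟨fun k => ?_, hgrad⟩
  simp_rw [hgrad]
  change m k = (S *ᵥ (S⁻¹ *ᵥ m)) k
  rw [mulVec_mulVec, mul_nonsing_inv S (S.isUnit_iff_isUnit_det.1 hS.isUnit), one_mulVec]
end

section
/- Tucker structure of the generalized liquid association tensor under the dimension reduction model: Let Γ₁ ∈ ℝ^{p₁×r₁}, Γ₂ ∈ ℝ^{p₂×r₂}, Γ₃ ∈ ℝ^{p₃×r₃} be matrices and f : ℝ^{r₃} → ℝ^{r₁×r₂} be differentiable, and define g : ℝ^{p₃} → ℝ^{p₁×p₂} by g(z) = Γ₁ f(Γ₃ᵀz) Γ₂ᵀ. Let Z be a random vector in ℝ^{p₃} such that every (∂f_{ab}/∂u_c)(Γ₃ᵀZ) is integrable. Then the tensor Φ with entries Φ[i,j,k] = E[(∂g_{ij}/∂z_k)(Z)] satisfies Φ[i,j,k] = Σ_{a,b,c} Γ₁[i,a]·C[a,b,c]·Γ₂[j,b]·Γ₃[k,c], where C is the r₁×r₂×r₃ tensor with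 entries C[a,b,c] = E[(∂f_{ab}/∂u_c)(Γ₃ᵀZ)]. Equivalently, Φ = C ×₁ Γ₁ ×₂ Γ₂ ×₃ Γ₃. -/
/-!
The `(i, j)` entry of `g z` is `∑ a b, Γ₁ i a * f (Γ₃ᵀ z) a b * Γ₂ j b`, and by the chain rule
`∂ₖ (f_ab ∘ Γ₃ᵀ) = ∑ c, Γ₃ k c * ∂_c f_ab ∘ Γ₃ᵀ`. Hence, pointwise in `z`, the partial-derivative
tensor of `g` is the Tucker product of the partial-derivative tensor of `f` at `Γ₃ᵀ z` with
`Γ₁, Γ₂, Γ₃`. The Tucker product is linear in its core, so it commutes with expectation.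
-/

open MeasureTheory Matrix

def tuckerProduct {R α β γ p₁ p₂ p₃ : Type*} [Fintype α] [Fintype β] [Fintype γ]
    [CommSemiring R] (C : α → β → γ → R) (A₁ : Matrix p₁ α R) (A₂ : Matrix p₂ β R)
    (A₃ : Matrix p₃ γ R) : p₁ → p₂ → p₃ → R :=
  fun i j k => ∑ a, ∑ b, ∑ c, A₁ i a * C a b c * A₂ j b * A₃ k c

theorem map_eq_sum_smul_map_single {R M F ι : Type*} [Fintype ι] [DecidableEq ι] [Semiring R]
    [AddCommMonoid M] [Module R M] [FunLike F (ι → R) M] [LinearMapClass F R (ι → R) M]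
    (φ : F) (v : ι → R) : φ v = ∑ c, v c • φ (Pi.single c 1) := by
  conv_lhs => rw [pi_eq_sum_univ' v]
  simp only [map_sum, map_smul]

theorem Matrix.mul_mul_transpose_apply {l m n o R : Type*} [Fintype m] [Fintype n]
    [CommSemiring R] (A : Matrix l m R) (M : Matrix m n R) (B : Matrix o n R) (i : l) (j : o) :
    (A * M * Bᵀ) i j = ∑ a, ∑ b, A i a * M a b * B j b := by
  simp only [mul_apply, transpose_apply, Finset.sum_mul]
  exact Finset.sum_comm

section Derivatives

variable {𝕜 : Type*} [NontriviallyNormedField 𝕜]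

theorem fderiv_comp_mulVec_apply [CompleteSpace 𝕜] {m n F : Type*} [Fintype m] [Fintype n]
    [NormedAddCommGroup F] [NormedSpace 𝕜 F] (A : Matrix m n 𝕜) {h : (m → 𝕜) → F}
    {z : n → 𝕜} (hh : DifferentiableAt 𝕜 h (A *ᵥ z)) (v : n → 𝕜) :
    fderiv 𝕜 (fun z => h (A *ᵥ z)) z v = fderiv 𝕜 h (A *ᵥ z) (A *ᵥ v) := by
  have hA : HasFDerivAt (A *ᵥ ·) (LinearMap.toContinuousLinearMap A.mulVecLin) z :=
    (LinearMap.toContinuousLinearMap A.mulVecLin).hasFDerivAt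
  exact congrArg (· v) (hh.hasFDerivAt.comp z hA).fderiv

theorem fderiv_mul_mul_transpose_apply {E p q r s : Type*} [NormedAddCommGroup E]
    [NormedSpace 𝕜 E] [Fintype r] [Fintype s] (A : Matrix p r 𝕜) (B : Matrix q s 𝕜)
    {F : E → Matrix r s 𝕜} {x : E} (hF : ∀ a b, DifferentiableAt 𝕜 (fun y => F y a b) x)
    (i : p) (j : q) (v : E) :
    fderiv 𝕜 (fun y => (A * F y * Bᵀ) i j) x v =
      ∑ a, ∑ b, A i a * fderiv 𝕜 (fun y => F y a b) x v * B j b := by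
  simp_rw [Matrix.mul_mul_transpose_apply]
  rw [fderiv_fun_sum fun a _ => by fun_prop, _root_.sum_apply]
  refine Finset.sum_congr rfl fun a _ => ?_
  rw [fderiv_fun_sum fun b _ => by fun_prop, _root_.sum_apply]
  refine Finset.sum_congr rfl fun b _ => ?_
  rw [fderiv_mul_const (by fun_prop), fderiv_const_mul (hF a b)]
  simp only [_root_.smul_apply, smul_eq_mul]
  ring

theorem fderiv_tucker_apply_single [CompleteSpace 𝕜] {p₁ p₂ p₃ r₁ r₂ r₃ : Type*}
    [Fintype p₃] [DecidableEq p₃] [Fintype r₁] [Fintype r₂] [Fintype r₃] [DecidableEq r₃]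
    (Γ₁ : Matrix p₁ r₁ 𝕜) (Γ₂ : Matrix p₂ r₂ 𝕜) (Γ₃ : Matrix p₃ r₃ 𝕜)
    {f : (r₃ → 𝕜) → Matrix r₁ r₂ 𝕜} {z : p₃ → 𝕜}
    (hf : ∀ a b, DifferentiableAt 𝕜 (fun u => f u a b) (Γ₃ᵀ *ᵥ z)) (i : p₁) (j : p₂) (k : p₃) :
    fderiv 𝕜 (fun z => (Γ₁ * f (Γ₃ᵀ *ᵥ z) * Γ₂ᵀ) i j) z (Pi.single k 1) =
      tuckerProduct (fun a b c => fderiv 𝕜 (fun u => f u a b) (Γ₃ᵀ *ᵥ z) (Pi.single c 1))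
        Γ₁ Γ₂ Γ₃ i j k := by
  have hfz : ∀ a b, DifferentiableAt 𝕜 (fun y => f (Γ₃ᵀ *ᵥ y) a b) z := fun a b =>
    (hf a b).comp z (Γ₃ᵀ.mulVecLin.toContinuousLinearMap.differentiableAt)
  rw [fderiv_mul_mul_transpose_apply Γ₁ Γ₂ hfz]
  simp only [tuckerProduct, fderiv_comp_mulVec_apply _ (hf _ _), mulVec_single_one,
    map_eq_sum_smul_map_single (v := Γ₃ᵀ.col k), col_apply, transpose_apply,
    smul_eq_mul, Finset.mul_sum, Finset.sum_mul]
  refine Finset.sum_congr rfl fun a _ => Finset.sum_congr rfl fun b _ =>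
    Finset.sum_congr rfl fun c _ => by ring

end Derivatives

theorem integral_tuckerProduct {Ω R α β γ p₁ p₂ p₃ : Type*} [MeasurableSpace Ω] [RCLike R]
    [Fintype α] [Fintype β] [Fintype γ] {μ : Measure Ω} {X : Ω → α → β → γ → R}
    (hX : ∀ a b c, Integrable (fun ω => X ω a b c) μ) (A₁ : Matrix p₁ α R)
    (A₂ : Matrix p₂ β R) (A₃ : Matrix p₃ γ R) (i : p₁) (j : p₂) (k : p₃) :
    ∫ ω, tuckerProduct (X ω) A₁ A₂ A₃ i j k ∂μ =
      tuckerProduct (fun a b c => ∫ ω, X ω a b c ∂μ) A₁ A₂ A₃ i j k := by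
  have hterm : ∀ a b c, Integrable (fun ω => A₁ i a * X ω a b c * A₂ j b * A₃ k c) μ :=
    fun a b c => (((hX a b c).const_mul _).mul_const _).mul_const _
  simp only [tuckerProduct]
  rw [integral_finsetSum _ fun a _ => integrable_finsetSum _ fun b _ =>
    integrable_finsetSum _ fun c _ => hterm a b c]
  refine Finset.sum_congr rfl fun a _ => ?_
  rw [integral_finsetSum _ fun b _ => integrable_finsetSum _ fun c _ => hterm a b c]
  refine Finset.sum_congr rfl fun b _ => ?_
  rw [integral_finsetSum _ fun c _ => hterm a b c]
  refine Finset.sum_congr rfl fun c _ => ?_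
  rw [integral_mul_const, integral_mul_const, integral_const_mul]

theorem gla_tucker_structure_general {Ω : Type*} [MeasurableSpace Ω]
    (P : Measure Ω) {p₁ p₂ p₃ r₁ r₂ r₃ : ℕ}
    (Γ₁ : Matrix (Fin p₁) (Fin r₁) ℝ) (Γ₂ : Matrix (Fin p₂) (Fin r₂) ℝ)
    (Γ₃ : Matrix (Fin p₃) (Fin r₃) ℝ)
    (f : (Fin r₃ → ℝ) → Matrix (Fin r₁) (Fin r₂) ℝ)
    (hfd : ∀ a b, Differentiable ℝ (fun u => f u a b))
    (g : (Fin p₃ → ℝ) → Matrix (Fin p₁) (Fin p₂) ℝ)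
    (hg : ∀ z, g z = Γ₁ * f (Γ₃ᵀ.mulVec z) * Γ₂ᵀ)
    (Z : Ω → Fin p₃ → ℝ)
    (hfint : ∀ a b c, Integrable
      (fun ω => fderiv ℝ (fun u => f u a b) (Γ₃ᵀ.mulVec (Z ω)) (Pi.single c 1)) P)
    (Φ : Fin p₁ → Fin p₂ → Fin p₃ → ℝ)
    (hΦ : ∀ i j k, Φ i j k = ∫ ω, fderiv ℝ (fun z => g z i j) (Z ω) (Pi.single k 1) ∂P)
    (C : Fin r₁ → Fin r₂ → Fin r₃ → ℝ)
    (hC : ∀ a b c, C a b c =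
      ∫ ω, fderiv ℝ (fun u => f u a b) (Γ₃ᵀ.mulVec (Z ω)) (Pi.single c 1) ∂P) :
    ∀ i j k, Φ i j k =
      ∑ a : Fin r₁, ∑ b : Fin r₂, ∑ c : Fin r₃,
        Γ₁ i a * C a b c * Γ₂ j b * Γ₃ k c := by
  intro i j k
  obtain rfl : g = fun z => Γ₁ * f (Γ₃ᵀ *ᵥ z) * Γ₂ᵀ := funext hg
  obtain rfl : C = fun a b c =>
      ∫ ω, fderiv ℝ (fun u => f u a b) (Γ₃ᵀ *ᵥ Z ω) (Pi.single c 1) ∂P :=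
    funext fun a => funext fun b => funext (hC a b)
  simp only [hΦ, fderiv_tucker_apply_single Γ₁ Γ₂ Γ₃ fun a b => (hfd a b).differentiableAt]
  exact integral_tuckerProduct hfint Γ₁ Γ₂ Γ₃ i j k

/-- Tucker structure of the generalized liquid association tensor under the dimension
reduction model: if `g(z) = Γ₁ f(Γ₃ᵀ z) Γ₂ᵀ` with `f` differentiable, then the tensor
`Φ[i,j,k] = E[∂g_ij/∂z_k (Z)]` satisfies `Φ = C ×₁ Γ₁ ×₂ Γ₂ ×₃ Γ₃`, where
`C[a,b,c] = E[∂f_ab/∂u_c (Γ₃ᵀ Z)]`. -/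
theorem gla_tucker_structure {Ω : Type*} [MeasurableSpace Ω]
    (P : Measure Ω) [IsProbabilityMeasure P] {p₁ p₂ p₃ r₁ r₂ r₃ : ℕ}
    (Γ₁ : Matrix (Fin p₁) (Fin r₁) ℝ) (Γ₂ : Matrix (Fin p₂) (Fin r₂) ℝ)
    (Γ₃ : Matrix (Fin p₃) (Fin r₃) ℝ)
    (f : (Fin r₃ → ℝ) → Matrix (Fin r₁) (Fin r₂) ℝ)
    (hfd : ∀ a b, Differentiable ℝ (fun u => f u a b))
    (g : (Fin p₃ → ℝ) → Matrix (Fin p₁) (Fin p₂) ℝ)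
    (hg : ∀ z, g z = Γ₁ * f (Γ₃ᵀ.mulVec z) * Γ₂ᵀ)
    (Z : Ω → Fin p₃ → ℝ) (hZ : Measurable Z)
    (hfint : ∀ a b c, Integrable
      (fun ω => fderiv ℝ (fun u => f u a b) (Γ₃ᵀ.mulVec (Z ω)) (Pi.single c 1)) P)
    (Φ : Fin p₁ → Fin p₂ → Fin p₃ → ℝ)
    (hΦ : ∀ i j k, Φ i j k = ∫ ω, fderiv ℝ (fun z => g z i j) (Z ω) (Pi.single k 1) ∂P)
    (C : Fin r₁ → Fin r₂ → Fin r₃ → ℝ)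
    (hC : ∀ a b c, C a b c =
      ∫ ω, fderiv ℝ (fun u => f u a b) (Γ₃ᵀ.mulVec (Z ω)) (Pi.single c 1) ∂P) :
    ∀ i j k, Φ i j k =
      ∑ a : Fin r₁, ∑ b : Fin r₂, ∑ c : Fin r₃,
        Γ₁ i a * C a b c * Γ₂ j b * Γ₃ k c :=
  gla_tucker_structure_general P Γ₁ Γ₂ Γ₃ f hfd g hg Z hfint Φ hΦ C hC
end

section
/- Tucker structure of the moment tensor Δ under the dimension reduction model: Let X, Y, Z be random vectors in ℝ^{p₁}, ℝ^{p₂}, ℝ^{p₃} on a common probability space. Suppose there are matrices Γ₁ ∈ ℝ^{p₁×r₁}, Γ₂ ∈ ℝ^{p₂×r₂}, Γ₃ ∈ ℝ^{p₃×r₃} and a measurable map f : ℝ^{r₃} → ℝ^{r₁×r₂} such that, with g(z) = Γ₁ f(Γ₃ᵀz) Γ₂ᵀ, for every i, j the random variable g(Z)[i,j] is a version of E[XᵢYⱼ | σ(Z)]; assume XᵢYⱼ, XᵢYⱼZ_k and f_{ab}(Γ₃ᵀZ)·Z_k are integrable for all indices. Then Δ[i,j,k] := E[XᵢYⱼZ_k]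 = Σ_{a,b} Γ₁[i,a]·Γ₂[j,b]·E[f_{ab}(Γ₃ᵀZ)·Z_k] for all i, j, k. Consequently, the mode-1 slice span of Δ is contained in the column span of Γ₁ and the mode-2 slice span of Δ is contained in the column span of Γ₂. -/
open MeasureTheory ProbabilityTheory Matrix

/-- The mode-1 slice span of an order-3 tensor: the span of the vectors `T[·,j,k]`. -/
def sliceSpan1 {p₁ p₂ p₃ : ℕ} (T : Fin p₁ → Fin p₂ → Fin p₃ → ℝ) :
    Submodule ℝ (Fin p₁ → ℝ) :=
  Submodule.span ℝ {v | ∃ j k, v = fun i => T i j k}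

/-- The mode-2 slice span of an order-3 tensor: the span of the vectors `T[i,·,k]`. -/
def sliceSpan2 {p₁ p₂ p₃ : ℕ} (T : Fin p₁ → Fin p₂ → Fin p₃ → ℝ) :
    Submodule ℝ (Fin p₂ → ℝ) :=
  Submodule.span ℝ {v | ∃ i k, v = fun j => T i j k}

/-- Tucker structure of the moment tensor `Δ = E[X ∘ Y ∘ Z]` under the dimension reduction
model `E[XᵢYⱼ | σ(Z)] = (Γ₁ f(Γ₃ᵀ Z) Γ₂ᵀ)[i,j]`: one has
`Δ[i,j,k] = ∑_{a,b} Γ₁[i,a] Γ₂[j,b] E[f_ab(Γ₃ᵀZ) Z_k]`, and consequently the mode-1 and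
mode-2 slice spans of `Δ` are contained in the column spans of `Γ₁` and `Γ₂`. -/
theorem moment_tensor_tucker_structure {Ω : Type*} [MeasurableSpace Ω]
    (P : Measure Ω) [IsProbabilityMeasure P] {p₁ p₂ p₃ r₁ r₂ r₃ : ℕ}
    (X : Ω → Fin p₁ → ℝ) (Y : Ω → Fin p₂ → ℝ) (Z : Ω → Fin p₃ → ℝ)
    (hX : Measurable X) (hY : Measurable Y) (hZ : Measurable Z)
    (Γ₁ : Matrix (Fin p₁) (Fin r₁) ℝ) (Γ₂ : Matrix (Fin p₂) (Fin r₂) ℝ)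
    (Γ₃ : Matrix (Fin p₃) (Fin r₃) ℝ)
    (f : (Fin r₃ → ℝ) → Matrix (Fin r₁) (Fin r₂) ℝ)
    (hfm : ∀ a b, Measurable (fun u => f u a b))
    (g : (Fin p₃ → ℝ) → Matrix (Fin p₁) (Fin p₂) ℝ)
    (hg : ∀ z, g z = Γ₁ * f (Γ₃ᵀ.mulVec z) * Γ₂ᵀ)
    (hcond : ∀ i j, (fun ω => g (Z ω) i j) =ᵐ[P]
      P[fun ω => X ω i * Y ω j | MeasurableSpace.comap Z inferInstance])
    (hXY : ∀ i j, Integrable (fun ω => X ω i * Y ω j) P)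
    (hXYZ : ∀ i j k, Integrable (fun ω => X ω i * Y ω j * Z ω k) P)
    (hfZ : ∀ a b k, Integrable (fun ω => f (Γ₃ᵀ.mulVec (Z ω)) a b * Z ω k) P)
    (Δ : Fin p₁ → Fin p₂ → Fin p₃ → ℝ)
    (hΔ : ∀ i j k, Δ i j k = ∫ ω, X ω i * Y ω j * Z ω k ∂P) :
    (∀ i j k, Δ i j k =
      ∑ a : Fin r₁, ∑ b : Fin r₂,
        Γ₁ i a * Γ₂ j b * ∫ ω, f (Γ₃ᵀ.mulVec (Z ω)) a b * Z ω k ∂P) ∧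
    sliceSpan1 Δ ≤ Submodule.span ℝ (Set.range Γ₁ᵀ) ∧
    sliceSpan2 Δ ≤ Submodule.span ℝ (Set.range Γ₂ᵀ) := by
  have hm : MeasurableSpace.comap Z inferInstance ≤ ‹MeasurableSpace Ω› := hZ.comap_le
  set m : MeasurableSpace Ω := MeasurableSpace.comap Z inferInstance with hm_def
  have hZmeas : Measurable[m] Z := Measurable.of_comap_le le_rfl
  have hZm : ∀ k, StronglyMeasurable[m] (fun ω => Z ω k) := fun k =>
    ((measurable_pi_apply k).comp hZmeas).stronglyMeasurable
  -- expand g pointwise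
  have hg' : ∀ z i j, g z i j = ∑ a : Fin r₁, ∑ b : Fin r₂,
      Γ₁ i a * f (Γ₃ᵀ.mulVec z) a b * Γ₂ j b := by
    intro z i j
    rw [hg z]
    rw [Finset.sum_comm]
    simp [Matrix.mul_apply, Finset.sum_mul, Matrix.transpose_apply]
  have key : ∀ i j k, Δ i j k =
      ∑ a : Fin r₁, ∑ b : Fin r₂,
        Γ₁ i a * Γ₂ j b * ∫ ω, f (Γ₃ᵀ.mulVec (Z ω)) a b * Z ω k ∂P := by
    intro i j k
    have hint_g : Integrable (fun ω => g (Z ω) i j * Z ω k) P := by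
      have : (fun ω => g (Z ω) i j * Z ω k) = fun ω =>
          ∑ a : Fin r₁, ∑ b : Fin r₂,
            Γ₁ i a * Γ₂ j b * (f (Γ₃ᵀ.mulVec (Z ω)) a b * Z ω k) := by
        funext ω
        rw [hg']
        simp [Finset.sum_mul]
        congr 1; funext a; congr 1; funext b; ring
      rw [this]
      exact integrable_finset_sum _ fun a _ =>
        integrable_finset_sum _ fun b _ => (hfZ a b k).const_mul _
    have step1 : (∫ ω, X ω i * Y ω j * Z ω k ∂P)
        = ∫ ω, Z ω k * (X ω i * Y ω j) ∂P := by
      congr 1; funext ω; ring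
    have hfg : Integrable ((fun ω => Z ω k) * fun ω => X ω i * Y ω j) P := by
      have := hXYZ i j k
      convert this using 1
      funext ω; simp [mul_comm, mul_assoc, mul_left_comm]
    have step2 : P[(fun ω => Z ω k) * (fun ω => X ω i * Y ω j) | m]
        =ᵐ[P] fun ω => Z ω k * g (Z ω) i j := by
      refine (condExp_mul_of_stronglyMeasurable_left (hZm k) hfg (hXY i j)).trans ?_
      filter_upwards [(hcond i j).symm] with ω hω
      simp [hω]
    have step3 : (∫ ω, Z ω k * (X ω i * Y ω j) ∂P)
        = ∫ ω, Z ω k * g (Z ω) i j ∂P := by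
      have h1 := integral_condExp (μ := P) hm
        (f := (fun ω => Z ω k) * (fun ω => X ω i * Y ω j))
      have h2 := integral_congr_ae step2
      rw [h2] at h1
      simp only [Pi.mul_apply] at h1
      exact h1.symm
    rw [hΔ, step1, step3]
    have : (∫ ω, Z ω k * g (Z ω) i j ∂P)
        = ∫ ω, ∑ a : Fin r₁, ∑ b : Fin r₂,
            Γ₁ i a * Γ₂ j b * (f (Γ₃ᵀ.mulVec (Z ω)) a b * Z ω k) ∂P := by
      congr 1; funext ω
      rw [hg']
      rw [Finset.mul_sum]
      congr 1; funext a
      rw [Finset.mul_sum]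
      congr 1; funext b
      ring
    rw [this, integral_finset_sum _ fun a _ =>
      integrable_finset_sum _ fun b _ => (hfZ a b k).const_mul _]
    refine Finset.sum_congr rfl fun a _ => ?_
    rw [integral_finset_sum _ fun b _ => (hfZ a b k).const_mul _]
    exact Finset.sum_congr rfl fun b _ => integral_const_mul _ _
  refine ⟨key, ?_, ?_⟩
  · rw [sliceSpan1, Submodule.span_le]
    rintro v ⟨j, k, rfl⟩
    have : (fun i => Δ i j k) = ∑ a : Fin r₁,
        (∑ b : Fin r₂, Γ₂ j b * ∫ ω, f (Γ₃ᵀ.mulVec (Z ω)) a b * Z ω k ∂P) • Γ₁ᵀ a := by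
      funext i
      rw [key i j k]
      simp [Finset.sum_apply, Finset.sum_mul, Matrix.transpose_apply]
      congr 1; funext a; congr 1; funext b; ring
    rw [this]
    exact Submodule.sum_mem _ fun a _ =>
      Submodule.smul_mem _ _ (Submodule.subset_span ⟨a, rfl⟩)
  · rw [sliceSpan2, Submodule.span_le]
    rintro v ⟨i, k, rfl⟩
    have : (fun j => Δ i j k) = ∑ b : Fin r₂,
        (∑ a : Fin r₁, Γ₁ i a * ∫ ω, f (Γ₃ᵀ.mulVec (Z ω)) a b * Z ω k ∂P) • Γ₂ᵀ b := by
      funext j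
      rw [key i j k]
      rw [Finset.sum_comm]
      simp [Finset.sum_apply, Finset.sum_mul, Matrix.transpose_apply]
      congr 1; funext b; congr 1; funext a; ring
    rw [this]
    exact Submodule.sum_mem _ fun b _ =>
      Submodule.smul_mem _ _ (Submodule.subset_span ⟨b, rfl⟩)
end

section
/- Closed-form solution of the bilinear liquid association maximization (Li 2004): Let M ∈ ℝ^{p×p} be a real symmetric matrix with p ≥ 2, and let λ_max and λ_min denote its largest and smallest eigenvalues, with corresponding orthonormal eigenvectors v₁ and v_p. Then the supremum of uᵀMv over all pairs of vectors u, v ∈ ℝ^p with ‖u‖₂ = ‖v‖₂ = 1 and ⟨u, v⟩ = 0 equals (λ_max − λ_min)/2, and it is attained at u = (v₁ + v_p)/√2, v = (v₁ − v_p)/√2. -/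
/-!
For symmetric `M` and orthonormal `u, v`, polarization gives
`4 uᵀMv = (u+v)ᵀM(u+v) − (u−v)ᵀM(u−v)`, and both `u ± v` have squared length `2`. The
Rayleigh bounds `λmin ‖w‖² ≤ wᵀMw ≤ λmax ‖w‖²` then give `uᵀMv ≤ (λmax − λmin)/2`, with
equality when `u + v` and `u − v` point along the extreme eigenvectors.
-/

open Matrix

namespace Matrix

variable {n : Type*} [Fintype n] {M : Matrix n n ℝ}

theorem four_mul_dotProduct_mulVec_eq_sub (hM : M.IsSymm) (u v : n → ℝ) :
    4 * (u ⬝ᵥ M *ᵥ v) = (u + v) ⬝ᵥ M *ᵥ (u + v) - (u - v) ⬝ᵥ M *ᵥ (u - v) := by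
  have hsymm : v ⬝ᵥ M *ᵥ u = u ⬝ᵥ M *ᵥ v := by
    rw [dotProduct_mulVec, ← mulVec_transpose, hM.eq, dotProduct_comm]
  simp only [mulVec_add, mulVec_sub, dotProduct_add, dotProduct_sub, add_dotProduct,
    sub_dotProduct, hsymm]
  ring

variable [DecidableEq n]

theorem dotProduct_mulVec_self_le_of_eigenvalues_le (hM : M.IsSymm) {c : ℝ}
    (h : ∀ (μ : ℝ) (w : n → ℝ), w ≠ 0 → M *ᵥ w = μ • w → μ ≤ c) (w : n → ℝ) :
    w ⬝ᵥ M *ᵥ w ≤ c * (w ⬝ᵥ w) := by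
  have hN : (c • 1 - M).IsHermitian := by
    simp [isHermitian_iff_isSymm, IsSymm, transpose_sub, hM.eq]
  -- each eigenvalue `ν` of `c • 1 - M` comes from the eigenvalue `c - ν ≤ c` of `M`
  have hpsd : (c • 1 - M).PosSemidef := by
    refine hN.posSemidef_iff_eigenvalues_nonneg.mpr fun i => ?_
    have hne : ⇑(hN.eigenvectorBasis i) ≠ 0 := fun h0 =>
      hN.eigenvectorBasis.orthonormal.ne_zero i (by ext j; exact congrFun h0 j)
    have hMv : M *ᵥ ⇑(hN.eigenvectorBasis i) =
        (c - hN.eigenvalues i) • ⇑(hN.eigenvectorBasis i) := by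
      rw [sub_smul, ← hN.mulVec_eigenvectorBasis i, sub_mulVec, smul_mulVec, one_mulVec]
      abel
    simp only [Pi.zero_apply]
    linarith [h _ _ hne hMv]
  have hquad := hpsd.dotProduct_mulVec_nonneg w
  simp only [star_trivial, sub_mulVec, smul_mulVec, one_mulVec, dotProduct_sub,
    dotProduct_smul, smul_eq_mul] at hquad
  linarith

theorem le_dotProduct_mulVec_self_of_le_eigenvalues (hM : M.IsSymm) {c : ℝ}
    (h : ∀ (μ : ℝ) (w : n → ℝ), w ≠ 0 → M *ᵥ w = μ • w → c ≤ μ) (w : n → ℝ) :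
    c * (w ⬝ᵥ w) ≤ w ⬝ᵥ M *ᵥ w := by
  have hneg : (-M).IsSymm := by simp [IsSymm, hM.eq]
  have hquad := dotProduct_mulVec_self_le_of_eigenvalues_le hneg (c := -c) (fun μ w hw hMw => by
    rw [neg_mulVec, neg_eq_iff_eq_neg, ← neg_smul] at hMw
    linarith [h _ w hw hMw]) w
  rw [neg_mulVec, dotProduct_neg] at hquad
  linarith

theorem dotProduct_mulVec_le_of_orthonormal (hM : M.IsSymm) {lmax lmin : ℝ}
    (hextreme : ∀ (μ : ℝ) (w : n → ℝ), w ≠ 0 → M *ᵥ w = μ • w → lmin ≤ μ ∧ μ ≤ lmax)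
    {u v : n → ℝ} (hu : u ⬝ᵥ u = 1) (hv : v ⬝ᵥ v = 1) (huv : u ⬝ᵥ v = 0) :
    u ⬝ᵥ M *ᵥ v ≤ (lmax - lmin) / 2 := by
  have hvu : v ⬝ᵥ u = 0 := by rwa [dotProduct_comm]
  have hadd : (u + v) ⬝ᵥ (u + v) = 2 := by
    simp only [dotProduct_add, add_dotProduct, hu, hv, huv, hvu]; norm_num
  have hsub : (u - v) ⬝ᵥ (u - v) = 2 := by
    simp only [dotProduct_sub, sub_dotProduct, hu, hv, huv, hvu]; norm_num
  have hle := dotProduct_mulVec_self_le_of_eigenvalues_le hM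
    (fun μ w hw hMw => (hextreme μ w hw hMw).2) (u + v)
  have hge := le_dotProduct_mulVec_self_of_le_eigenvalues hM
    (fun μ w hw hMw => (hextreme μ w hw hMw).1) (u - v)
  rw [hadd] at hle
  rw [hsub] at hge
  linarith [four_mul_dotProduct_mulVec_eq_sub hM u v]

end Matrix

section Orthonormal

variable {n : Type*} [Fintype n] {a b : n → ℝ}

theorem dotProduct_smul_add_smul_of_orthonormal (ha : a ⬝ᵥ a = 1) (hb : b ⬝ᵥ b = 1)
    (hab : a ⬝ᵥ b = 0) (x y x' y' : ℝ) :
    (x • a + y • b) ⬝ᵥ (x' • a + y' • b) = x * x' + y * y' := by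
  have hba : b ⬝ᵥ a = 0 := by rwa [dotProduct_comm]
  simp only [dotProduct_add, add_dotProduct, dotProduct_smul, smul_dotProduct, smul_eq_mul,
    ha, hb, hab, hba]
  ring

theorem dotProduct_mulVec_smul_add_smul_of_eigenvectors {M : Matrix n n ℝ} {α β : ℝ}
    (ha : a ⬝ᵥ a = 1) (hb : b ⬝ᵥ b = 1) (hab : a ⬝ᵥ b = 0)
    (hMa : M *ᵥ a = α • a) (hMb : M *ᵥ b = β • b) (x y x' y' : ℝ) :
    (x • a + y • b) ⬝ᵥ M *ᵥ (x' • a + y' • b) = x * x' * α + y * y' * β := by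
  rw [mulVec_add, mulVec_smul, mulVec_smul, hMa, hMb, smul_smul, smul_smul,
    dotProduct_smul_add_smul_of_orthonormal ha hb hab]
  ring

end Orthonormal

theorem bilinear_la_maximization_general {p : ℕ}
    (M : Matrix (Fin p) (Fin p) ℝ) (hM : Mᵀ = M)
    (lmax lmin : ℝ) (v₁ vp : Fin p → ℝ)
    (hv₁unit : v₁ ⬝ᵥ v₁ = 1) (hvpunit : vp ⬝ᵥ vp = 1) (horth : v₁ ⬝ᵥ vp = 0)
    (hv₁eig : M.mulVec v₁ = lmax • v₁) (hvpeig : M.mulVec vp = lmin • vp)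
    (hextreme : ∀ (μ : ℝ) (w : Fin p → ℝ), w ≠ 0 → M.mulVec w = μ • w →
      lmin ≤ μ ∧ μ ≤ lmax) :
    IsGreatest {x : ℝ | ∃ u v : Fin p → ℝ,
        u ⬝ᵥ u = 1 ∧ v ⬝ᵥ v = 1 ∧ u ⬝ᵥ v = 0 ∧ x = u ⬝ᵥ M.mulVec v}
      ((lmax - lmin) / 2) ∧
    (fun i => (v₁ i + vp i) / Real.sqrt 2) ⬝ᵥ
        M.mulVec (fun i => (v₁ i - vp i) / Real.sqrt 2) = (lmax - lmin) / 2 := by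
  set s := (Real.sqrt 2)⁻¹
  have hs : s * s = 1 / 2 := by
    rw [← mul_inv, Real.mul_self_sqrt zero_le_two, one_div]
  have hu : (fun i => (v₁ i + vp i) / Real.sqrt 2) = s • v₁ + s • vp := by
    ext i; simp only [Pi.add_apply, Pi.smul_apply, smul_eq_mul, s]; ring
  have hv : (fun i => (v₁ i - vp i) / Real.sqrt 2) = s • v₁ + (-s) • vp := by
    ext i; simp only [Pi.add_apply, Pi.smul_apply, smul_eq_mul, s]; ring
  have hval : (fun i => (v₁ i + vp i) / Real.sqrt 2) ⬝ᵥ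
      M *ᵥ (fun i => (v₁ i - vp i) / Real.sqrt 2) = (lmax - lmin) / 2 := by
    rw [hu, hv, dotProduct_mulVec_smul_add_smul_of_eigenvectors hv₁unit hvpunit horth hv₁eig
      hvpeig]
    linear_combination (lmax - lmin) * hs
  have hdot := dotProduct_smul_add_smul_of_orthonormal hv₁unit hvpunit horth
  refine ⟨⟨⟨_, _, ?_, ?_, ?_, hval.symm⟩, ?_⟩, hval⟩
  · rw [hu, hdot]; linear_combination 2 * hs
  · rw [hv, hdot]; linear_combination 2 * hs
  · rw [hu, hv, hdot]; ring
  · rintro x ⟨u, v, hu, hv, huv, rfl⟩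
    exact dotProduct_mulVec_le_of_orthonormal hM hextreme hu hv huv

/-- Closed-form solution of the bilinear liquid association maximization (Li 2004): for a
real symmetric `p×p` matrix `M` (`p ≥ 2`) with largest/smallest eigenvalues `λmax`/`λmin`
and corresponding orthonormal eigenvectors `v₁`/`vp`, the supremum of `uᵀ M v` over unit
vectors `u ⊥ v` equals `(λmax − λmin)/2`, attained at `u = (v₁+vp)/√2`, `v = (v₁−vp)/√2`. -/
theorem bilinear_la_maximization {p : ℕ} (hp : 2 ≤ p)
    (M : Matrix (Fin p) (Fin p) ℝ) (hM : Mᵀ = M)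
    (lmax lmin : ℝ) (v₁ vp : Fin p → ℝ)
    (hv₁unit : v₁ ⬝ᵥ v₁ = 1) (hvpunit : vp ⬝ᵥ vp = 1) (horth : v₁ ⬝ᵥ vp = 0)
    (hv₁eig : M.mulVec v₁ = lmax • v₁) (hvpeig : M.mulVec vp = lmin • vp)
    (hextreme : ∀ (μ : ℝ) (w : Fin p → ℝ), w ≠ 0 → M.mulVec w = μ • w →
      lmin ≤ μ ∧ μ ≤ lmax) :
    IsGreatest {x : ℝ | ∃ u v : Fin p → ℝ,
        u ⬝ᵥ u = 1 ∧ v ⬝ᵥ v = 1 ∧ u ⬝ᵥ v = 0 ∧ x = u ⬝ᵥ M.mulVec v}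
      ((lmax - lmin) / 2) ∧
    (fun i => (v₁ i + vp i) / Real.sqrt 2) ⬝ᵥ
        M.mulVec (fun i => (v₁ i - vp i) / Real.sqrt 2) = (lmax - lmin) / 2 :=
  bilinear_la_maximization_general M hM lmax lmin v₁ vp hv₁unit hvpunit horth hv₁eig hvpeig hextreme
end

section
/- Hard-thresholding screening lemma: Let B, B̂ ∈ ℝ^{p×q} be matrices and η > 0 such that |B̂[j,l] − B[j,l]| ≤ η for all j ∈ {1,…,p}, l ∈ {1,…,q}. Define the thresholded index set Î = {j : max_l |B̂[j,l]| > η} and the true active set I = {j : the j-th row of B is not identically zero}. Then {j : max_l |B[j,l]| > 2η} ⊆ Î ⊆ I. In particular, if every nonzero row of B contains an entry of absolute value greater than 2η, then Î = I. -/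
/-- Hard-thresholding screening lemma: if `|B̂[j,l] − B[j,l]| ≤ η` entrywise, then the
thresholded set `Î = {j : max_l |B̂[j,l]| > η}` satisfies
`{j : max_l |B[j,l]| > 2η} ⊆ Î ⊆ I`, where `I` is the set of nonzero rows of `B`; in
particular, if every nonzero row of `B` has an entry of absolute value greater than `2η`,
then `Î = I`. -/
theorem hard_thresholding_screening {p q : ℕ}
    (B Bhat : Matrix (Fin p) (Fin q) ℝ) (η : ℝ) (hη : 0 < η)
    (hclose : ∀ j l, |Bhat j l - B j l| ≤ η) :
    {j : Fin p | ∃ l, 2 * η < |B j l|} ⊆ {j : Fin p | ∃ l, η < |Bhat j l|} ∧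
    {j : Fin p | ∃ l, η < |Bhat j l|} ⊆ {j : Fin p | ∃ l, B j l ≠ 0} ∧
    ((∀ j : Fin p, (∃ l, B j l ≠ 0) → ∃ l, 2 * η < |B j l|) →
      {j : Fin p | ∃ l, η < |Bhat j l|} = {j : Fin p | ∃ l, B j l ≠ 0}) := by
  have h1 : {j : Fin p | ∃ l, 2 * η < |B j l|} ⊆ {j : Fin p | ∃ l, η < |Bhat j l|} := by
    rintro j ⟨l, hl⟩
    refine ⟨l, ?_⟩
    have := hclose j l
    have := abs_sub_abs_le_abs_sub (B j l) (Bhat j l)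
    rw [abs_sub_comm] at this
    linarith
  have h2 : {j : Fin p | ∃ l, η < |Bhat j l|} ⊆ {j : Fin p | ∃ l, B j l ≠ 0} := by
    rintro j ⟨l, hl⟩
    refine ⟨l, fun h0 => ?_⟩
    have := hclose j l
    rw [h0, sub_zero] at this
    linarith
  exact ⟨h1, h2, fun hbig => Set.Subset.antisymm h2 (fun j hj => h1 (hbig j hj))⟩
end
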